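/- Let T > 0 and let Y : ℝ² → ℝ⁵ be smooth, 2π-periodic in θ, harmonic into de Sitter space and η-conformal on [−T,T] × ℝ, with M := sup_{[−T,T]×ℝ} |Y|_ξ and G := sup_{[−T,T]×ℝ} |∇Y|_ξ both finite. Define α(t) := ∫₀^{2π} |∂_θY(t,θ)|²_ξ dθ, the circle average Y*(t) := (1/2π) ∫₀^{2π} Y(t,θ) dθ, and γ(t) := ∫₀^{2π} (|∂_t(Y − Y*)(t,θ)|²_ξ + |∂_θY(t,θ)|²_ξ) dθ. Then for every t ∈ (−T,T), |γ'(t) − 2α'(t)| ≤ 16 M G α(t). -/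

import Mathlib

open Real Set MeasureTheory intervalIntegral Filter

noncomputable section

/-- ℝ⁵ with its euclidean norm. -/
abbrev E5 := EuclideanSpace ℝ (Fin 5)

/-- The Minkowski bilinear form `η` on ℝ⁵. -/
def etaM (x y : E5) : ℝ := x 0 * y 0 + x 1 * y 1 + x 2 * y 2 + x 3 * y 3 - x 4 * y 4

/-- Partial derivative in the first (`t`) variable. -/
def pT (Y : ℝ → ℝ → E5) : ℝ → ℝ → E5 := fun t θ => deriv (fun s => Y s θ) t

/-- Partial derivative in the second (`θ`) variable. -/
def pTh (Y : ℝ → ℝ → E5) : ℝ → ℝ → E5 := fun t θ => deriv (fun s => Y t s) θ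

/-- The flat Laplacian `ΔY = ∂²_{tt}Y + ∂²_{θθ}Y`. -/
def lapY (Y : ℝ → ℝ → E5) (t θ : ℝ) : E5 := pT (pT Y) t θ + pTh (pTh Y) t θ

/-- `|∇Y|²_η = η(∂_tY,∂_tY) + η(∂_θY,∂_θY)`. -/
def gradSqEta (Y : ℝ → ℝ → E5) (t θ : ℝ) : ℝ :=
  etaM (pT Y t θ) (pT Y t θ) + etaM (pTh Y t θ) (pTh Y t θ)

/-- `|∇Y|²_ξ = |∂_tY|²_ξ + |∂_θY|²_ξ` (euclidean). -/
def gradSqXi (Y : ℝ → ℝ → E5) (t θ : ℝ) : ℝ :=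
  ‖pT Y t θ‖ ^ 2 + ‖pTh Y t θ‖ ^ 2

/-- `Y` is `2π`-periodic in `θ`. -/
def Periodic2pi (Y : ℝ → ℝ → E5) : Prop := ∀ t θ : ℝ, Y t (θ + 2 * π) = Y t θ

/-- `Y` is harmonic into de Sitter space on `I × ℝ` : `ΔY = −|∇Y|²_η Y`. -/
def HarmonicDS (Y : ℝ → ℝ → E5) (I : Set ℝ) : Prop :=
  ∀ t ∈ I, ∀ θ : ℝ, lapY Y t θ = -(gradSqEta Y t θ) • Y t θ

/-- `Y` is `η`-conformal on `I × ℝ`. -/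
def ConformalEta (Y : ℝ → ℝ → E5) (I : Set ℝ) : Prop :=
  ∀ t ∈ I, ∀ θ : ℝ,
    etaM (pT Y t θ) (pT Y t θ) = etaM (pTh Y t θ) (pTh Y t θ) ∧
    etaM (pT Y t θ) (pTh Y t θ) = 0

/-- `α(t) = ∫₀^{2π} |∂_θY(t,θ)|²_ξ dθ`. -/
def alphaF (Y : ℝ → ℝ → E5) (t : ℝ) : ℝ := ∫ θ in (0:ℝ)..(2 * π), ‖pTh Y t θ‖ ^ 2

/-- `β(t) = ∫₀^{2π} |∇Y(t,θ)|²_ξ dθ`. -/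
def betaF (Y : ℝ → ℝ → E5) (t : ℝ) : ℝ := ∫ θ in (0:ℝ)..(2 * π), gradSqXi Y t θ

/-- The circle average `Y*(t) = (1/2π) ∫₀^{2π} Y(t,θ) dθ`. -/
def Ystar (Y : ℝ → ℝ → E5) (t : ℝ) : E5 := (2 * π)⁻¹ • ∫ θ in (0:ℝ)..(2 * π), Y t θ

/-- `γ(t) = ∫₀^{2π} (|∂_t(Y − Y*)(t,θ)|²_ξ + |∂_θY(t,θ)|²_ξ) dθ`. -/
def gammaF (Y : ℝ → ℝ → E5) (t : ℝ) : ℝ :=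
  ∫ θ in (0:ℝ)..(2 * π), (‖pT Y t θ - deriv (Ystar Y) t‖ ^ 2 + ‖pTh Y t θ‖ ^ 2)

/-- `δ(t) = ∫₀^{2π} (|∂²_{tθ}Y|²_ξ + |∂²_{θθ}Y|²_ξ) dθ`. -/
def deltaF (Y : ℝ → ℝ → E5) (t : ℝ) : ℝ :=
  ∫ θ in (0:ℝ)..(2 * π), (‖pT (pTh Y) t θ‖ ^ 2 + ‖pTh (pTh Y) t θ‖ ^ 2)

/-! Differentiating under the integral sign, `γ' − 2α' = 2∫⟨∂_tY − Y*', ∂²_tY − Y*''⟩ −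
2∫⟨∂_θY, ∂²_{tθ}Y⟩`, and the `Y*''` term vanishes because `∂_tY − Y*'` has mean zero in `θ`.
Integrating the last term by parts in `θ` (periodicity kills the boundary terms) gives
`γ' − 2α' = 2∫⟨∂_tY − Y*', ΔY⟩ = −2∫|∇Y|²_η ⟨∂_tY − Y*', Y⟩`. Conformality turns `|∇Y|²_η` into
`2η(∂_θY, ∂_θY)`, of absolute value at most `2|∂_θY|²_ξ`, while `|∂_tY − Y*'|_ξ ≤ 2G` and
`|Y|_ξ ≤ M`; hence `|γ' − 2α'| ≤ 8MGα`. -/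

open Function
open scoped RealInnerProductSpace

section Calculus

variable {F : Type*} [NormedAddCommGroup F] [NormedSpace ℝ F]

theorem HasFDerivAt.hasDerivAt_uncurry_left {W : ℝ → ℝ → F} {L : ℝ × ℝ →L[ℝ] F} {t θ : ℝ}
    (h : HasFDerivAt (uncurry W) L (t, θ)) : HasDerivAt (W · θ) (L (1, 0)) t :=
  h.comp_hasDerivAt (x := t) (f := fun s => (s, θ))
    ((hasDerivAt_id t).prodMk (hasDerivAt_const t θ))

theorem HasFDerivAt.hasDerivAt_uncurry_right {W : ℝ → ℝ → F} {L : ℝ × ℝ →L[ℝ] F} {t θ : ℝ}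
    (h : HasFDerivAt (uncurry W) L (t, θ)) : HasDerivAt (W t ·) (L (0, 1)) θ :=
  h.comp_hasDerivAt (x := θ) (f := fun s => (t, s))
    ((hasDerivAt_const θ t).prodMk (hasDerivAt_id θ))

theorem hasDerivAt_intervalIntegral_of_continuous {W W' : ℝ → ℝ → F} (a b t : ℝ)
    (hW : Continuous (uncurry W)) (hW' : Continuous (uncurry W'))
    (hd : ∀ x θ, HasDerivAt (W · θ) (W' x θ) x) :
    HasDerivAt (fun x => ∫ θ in a..b, W x θ) (∫ θ in a..b, W' t θ) t := by
  obtain ⟨C, hC⟩ := (isCompact_closedBall t 1 |>.prod isCompact_uIcc).exists_bound_of_continuousOn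
    (s := Metric.closedBall t 1 ×ˢ uIcc a b) hW'.continuousOn
  refine (intervalIntegral.hasDerivAt_integral_of_dominated_loc_of_deriv_le
    (bound := fun _ => C) (Metric.ball_mem_nhds t one_pos)
    (Eventually.of_forall fun x => (hW.uncurry_left x).aestronglyMeasurable)
    ((hW.uncurry_left t).intervalIntegrable _ _) (hW'.uncurry_left t).aestronglyMeasurable
    (Eventually.of_forall fun θ hθ x hx => hC (x, θ) ⟨Metric.ball_subset_closedBall hx,
      uIoc_subset_uIcc hθ⟩)
    intervalIntegrable_const (Eventually.of_forall fun θ _ x _ => hd x θ)).2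

end Calculus

section InnerProduct

variable {E : Type*} [NormedAddCommGroup E] [InnerProductSpace ℝ E]

theorem hasDerivAt_intervalIntegral_norm_sq {W W' : ℝ → ℝ → E} (a b t : ℝ)
    (hW : Continuous (uncurry W)) (hW' : Continuous (uncurry W'))
    (hd : ∀ x θ, HasDerivAt (W · θ) (W' x θ) x) :
    HasDerivAt (fun x => ∫ θ in a..b, ‖W x θ‖ ^ 2) (∫ θ in a..b, 2 * ⟪W t θ, W' t θ⟫) t :=
  hasDerivAt_intervalIntegral_of_continuous (W := fun x θ => ‖W x θ‖ ^ 2) a b t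
    (by fun_prop) (continuous_const.mul (hW.inner hW')) fun x θ => (hd x θ).norm_sq

theorem integral_inner_deriv_eq_neg_of_endpoints_eq {f f' g g' : ℝ → E} {a b : ℝ}
    (hf : ∀ θ, HasDerivAt f (f' θ) θ) (hg : ∀ θ, HasDerivAt g (g' θ) θ)
    (hf' : Continuous f') (hg' : Continuous g') (hfp : f b = f a) (hgp : g b = g a) :
    ∫ θ in a..b, ⟪f' θ, g θ⟫ = -∫ θ in a..b, ⟪f θ, g' θ⟫ := by
  have hfc : Continuous f := continuous_iff_continuousAt.2 fun θ => (hf θ).continuousAt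
  have hgc : Continuous g := continuous_iff_continuousAt.2 fun θ => (hg θ).continuousAt
  have hsum : ∫ θ in a..b, (⟪f θ, g' θ⟫ + ⟪f' θ, g θ⟫) = 0 := by
    rw [intervalIntegral.integral_eq_sub_of_hasDerivAt (fun θ _ => (hf θ).inner ℝ (hg θ))
      (((hfc.inner hg').add (hf'.inner hgc)).intervalIntegrable _ _), hfp, hgp, sub_self]
  rw [intervalIntegral.integral_add ((hfc.inner hg').intervalIntegrable _ _)
    ((hf'.inner hgc).intervalIntegrable _ _)] at hsum
  linarith

end InnerProduct

section PartialDerivatives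

variable {Z : ℝ → ℝ → E5}

theorem pT_eq_of_hasFDerivAt {L : ℝ × ℝ →L[ℝ] E5} {t θ : ℝ}
    (h : HasFDerivAt (uncurry Z) L (t, θ)) : pT Z t θ = L (1, 0) :=
  h.hasDerivAt_uncurry_left.deriv

theorem pTh_eq_of_hasFDerivAt {L : ℝ × ℝ →L[ℝ] E5} {t θ : ℝ}
    (h : HasFDerivAt (uncurry Z) L (t, θ)) : pTh Z t θ = L (0, 1) :=
  h.hasDerivAt_uncurry_right.deriv

theorem uncurry_pT_eq_fderiv (h : Differentiable ℝ (uncurry Z)) :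
    uncurry (pT Z) = fun p => fderiv ℝ (uncurry Z) p (1, 0) :=
  funext fun p => pT_eq_of_hasFDerivAt (h p).hasFDerivAt

theorem uncurry_pTh_eq_fderiv (h : Differentiable ℝ (uncurry Z)) :
    uncurry (pTh Z) = fun p => fderiv ℝ (uncurry Z) p (0, 1) :=
  funext fun p => pTh_eq_of_hasFDerivAt (h p).hasFDerivAt

theorem hasDerivAt_pT (h : Differentiable ℝ (uncurry Z)) (t θ : ℝ) :
    HasDerivAt (Z · θ) (pT Z t θ) t :=
  (h (t, θ)).hasFDerivAt.hasDerivAt_uncurry_left.differentiableAt.hasDerivAt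

theorem hasDerivAt_pTh (h : Differentiable ℝ (uncurry Z)) (t θ : ℝ) :
    HasDerivAt (Z t ·) (pTh Z t θ) θ :=
  (h (t, θ)).hasFDerivAt.hasDerivAt_uncurry_right.differentiableAt.hasDerivAt

theorem ContDiff.uncurry_pT {n : WithTop ℕ∞} (h : ContDiff ℝ (n + 1) (uncurry Z)) :
    ContDiff ℝ n (uncurry (pT Z)) := by
  rw [uncurry_pT_eq_fderiv (h.differentiable (by simp))]
  exact (h.fderiv_right le_rfl).clm_apply contDiff_const

theorem ContDiff.uncurry_pTh {n : WithTop ℕ∞} (h : ContDiff ℝ (n + 1) (uncurry Z)) :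
    ContDiff ℝ n (uncurry (pTh Z)) := by
  rw [uncurry_pTh_eq_fderiv (h.differentiable (by simp))]
  exact (h.fderiv_right le_rfl).clm_apply contDiff_const

theorem pTh_pT (h : ContDiff ℝ 2 (uncurry Z)) : pTh (pT Z) = pT (pTh Z) := by
  have h1 : Differentiable ℝ (uncurry Z) := h.differentiable (by simp)
  have h2 : Differentiable ℝ (fderiv ℝ (uncurry Z)) :=
    (h.fderiv_right (m := 1) (by norm_num)).differentiable one_ne_zero
  funext t θ
  set f'' := fderiv ℝ (fderiv ℝ (uncurry Z)) (t, θ)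
  have hv : ∀ v, HasFDerivAt (fun p => fderiv ℝ (uncurry Z) p v) (f''.flip v) (t, θ) := fun v => by
    simpa using (h2 (t, θ)).hasFDerivAt.clm_apply (hasFDerivAt_const v (t, θ))
  rw [pTh_eq_of_hasFDerivAt (Z := pT Z) (by rw [uncurry_pT_eq_fderiv h1]; exact hv (1, 0)),
    pT_eq_of_hasFDerivAt (Z := pTh Z) (by rw [uncurry_pTh_eq_fderiv h1]; exact hv (0, 1))]
  exact second_derivative_symmetric (fun p => (h1 p).hasFDerivAt) (h2 (t, θ)).hasFDerivAt _ _

theorem Periodic2pi.pT (h : Periodic2pi Z) : Periodic2pi (pT Z) := fun t θ =>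
  congrArg (deriv · t) (funext fun s => h s θ)

theorem Periodic2pi.pTh (h : Periodic2pi Z) : Periodic2pi (pTh Z) := fun t θ => by
  simp only [_root_.pTh, ← deriv_comp_add_const]
  exact congrArg (deriv · θ) (funext fun s => h t s)

end PartialDerivatives

section CircleAverage

variable {Z : ℝ → ℝ → E5}

theorem hasDerivAt_Ystar (h : ContDiff ℝ 1 (uncurry Z)) (t : ℝ) :
    HasDerivAt (Ystar Z) (Ystar (pT Z) t) t :=
  (hasDerivAt_intervalIntegral_of_continuous 0 (2 * π) t h.continuous
    (ContDiff.uncurry_pT (n := 0) h).continuous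
    (hasDerivAt_pT (h.differentiable one_ne_zero))).fun_const_smul _

theorem continuous_Ystar (h : Continuous (uncurry Z)) : Continuous (Ystar Z) :=
  (continuous_parametric_intervalIntegral_of_continuous' h 0 (2 * π)).const_smul (2 * π)⁻¹

theorem integral_inner_sub_Ystar {t : ℝ} (h : Continuous (Z t)) (v : E5) :
    ∫ θ in 0..2 * π, ⟪Z t θ - Ystar Z t, v⟫ = 0 := by
  have hmean : ∫ θ in 0..2 * π, (Z t θ - Ystar Z t) = 0 := by
    rw [intervalIntegral.integral_sub (h.intervalIntegrable _ _) intervalIntegrable_const,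
      intervalIntegral.integral_const, Ystar, sub_zero, smul_smul,
      mul_inv_cancel₀ (by positivity), one_smul, sub_self]
  have hint : IntervalIntegrable (fun θ => Z t θ - Ystar Z t) volume 0 (2 * π) :=
    (h.sub continuous_const).intervalIntegrable _ _
  rw [intervalIntegral.integral_congr (g := fun θ => innerSL ℝ v (Z t θ - Ystar Z t))
      fun θ _ => real_inner_comm v _,
    ContinuousLinearMap.intervalIntegral_comp_comm _ hint, hmean, map_zero]

theorem norm_Ystar_le {t C : ℝ} (h : ∀ θ, ‖Z t θ‖ ≤ C) : ‖Ystar Z t‖ ≤ C := by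
  have hint := intervalIntegral.norm_integral_le_of_norm_le_const (a := 0) (b := 2 * π)
    fun θ _ => h θ
  rw [sub_zero, abs_of_pos (by positivity)] at hint
  rw [Ystar, norm_smul, norm_inv, Real.norm_of_nonneg (by positivity)]
  calc (2 * π)⁻¹ * ‖∫ θ in 0..2 * π, Z t θ‖ ≤ (2 * π)⁻¹ * (C * (2 * π)) := by gcongr
    _ = C := by field_simp

end CircleAverage

section Energies

variable {Y : ℝ → ℝ → E5}

theorem hasDerivAt_alphaF (h : ContDiff ℝ 2 (uncurry Y)) (t : ℝ) :
    HasDerivAt (alphaF Y) (∫ θ in 0..2 * π, 2 * ⟪pTh Y t θ, pT (pTh Y) t θ⟫) t := by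
  have hTh : ContDiff ℝ 1 (uncurry (pTh Y)) := h.uncurry_pTh
  exact hasDerivAt_intervalIntegral_norm_sq _ _ t hTh.continuous
    (ContDiff.uncurry_pT (n := 0) hTh).continuous (hasDerivAt_pT (hTh.differentiable one_ne_zero))

theorem hasDerivAt_gammaF (h : ContDiff ℝ 2 (uncurry Y)) (t : ℝ) :
    HasDerivAt (gammaF Y)
      ((∫ θ in 0..2 * π,
          2 * ⟪pT Y t θ - Ystar (pT Y) t, pT (pT Y) t θ - Ystar (pT (pT Y)) t⟫) +
        ∫ θ in 0..2 * π, 2 * ⟪pTh Y t θ, pT (pTh Y) t θ⟫) t := by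
  have hT : ContDiff ℝ 1 (uncurry (pT Y)) := h.uncurry_pT
  have hTT : Continuous (uncurry (pT (pT Y))) := (ContDiff.uncurry_pT (n := 0) hT).continuous
  have hTh : Continuous (uncurry (pTh Y)) := (ContDiff.uncurry_pTh (n := 1) h).continuous
  have hsplit : gammaF Y =
      (fun x => ∫ θ in 0..2 * π, ‖pT Y x θ - Ystar (pT Y) x‖ ^ 2) + alphaF Y := by
    ext x
    rw [gammaF, (hasDerivAt_Ystar (h.of_le one_le_two) x).deriv]
    exact intervalIntegral.integral_add
      ((((hT.continuous.uncurry_left x).sub continuous_const).norm.pow 2).intervalIntegrable _ _)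
      (((hTh.uncurry_left x).norm.pow 2).intervalIntegrable _ _)
  have hfluct := hasDerivAt_intervalIntegral_norm_sq (W := fun x θ => pT Y x θ - Ystar (pT Y) x)
    (W' := fun x θ => pT (pT Y) x θ - Ystar (pT (pT Y)) x)
    0 (2 * π) t (hT.continuous.sub ((continuous_Ystar hT.continuous).comp continuous_fst))
    (hTT.sub ((continuous_Ystar hTT).comp continuous_fst)) fun x θ =>
      (hasDerivAt_pT (hT.differentiable one_ne_zero) x θ).sub (hasDerivAt_Ystar hT x)
  rw [hsplit]
  exact hfluct.add (hasDerivAt_alphaF h t)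

theorem deriv_gammaF_sub_two_mul_deriv_alphaF (h : ContDiff ℝ 2 (uncurry Y))
    (hper : Periodic2pi Y) (t : ℝ) :
    deriv (gammaF Y) t - 2 * deriv (alphaF Y) t =
      2 * ∫ θ in 0..2 * π, ⟪pT Y t θ - Ystar (pT Y) t, lapY Y t θ⟫ := by
  have hT : ContDiff ℝ 1 (uncurry (pT Y)) := h.uncurry_pT
  have hTh : ContDiff ℝ 1 (uncurry (pTh Y)) := h.uncurry_pTh
  have cont : ∀ {W : ℝ → ℝ → E5}, ContDiff ℝ 1 (uncurry W) →
      Continuous (W t) ∧ Continuous (pT W t) ∧ Continuous (pTh W t) := fun hW =>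
    ⟨hW.continuous.uncurry_left t, (ContDiff.uncurry_pT (n := 0) hW).continuous.uncurry_left t,
      (ContDiff.uncurry_pTh (n := 0) hW).continuous.uncurry_left t⟩
  obtain ⟨cT, cTT, -⟩ := cont hT
  obtain ⟨cTh, cTTh, cThTh⟩ := cont hTh
  have cu : Continuous fun θ => pT Y t θ - Ystar (pT Y) t := cT.sub continuous_const
  have hmean : ∫ θ in 0..2 * π, ⟪pT Y t θ - Ystar (pT Y) t, Ystar (pT (pT Y)) t⟫ = 0 :=
    integral_inner_sub_Ystar cT _
  have hparts : ∫ θ in 0..2 * π, ⟪pTh Y t θ, pT (pTh Y) t θ⟫ =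
      -∫ θ in 0..2 * π, ⟪pT Y t θ - Ystar (pT Y) t, pTh (pTh Y) t θ⟫ :=
    (intervalIntegral.integral_congr fun θ _ => real_inner_comm _ _).trans <|
    integral_inner_deriv_eq_neg_of_endpoints_eq
      (fun θ => by
        rw [← pTh_pT h]
        exact (hasDerivAt_pTh (hT.differentiable one_ne_zero) t θ).sub_const _)
      (hasDerivAt_pTh (hTh.differentiable one_ne_zero) t) cTTh cThTh
      (by simpa using hper.pT t 0) (by simpa using hper.pTh t 0)
  rw [(hasDerivAt_gammaF h t).deriv, (hasDerivAt_alphaF h t).deriv]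
  simp only [lapY, inner_add_right, inner_sub_right, intervalIntegral.integral_const_mul]
  rw [intervalIntegral.integral_sub ((cu.inner cTT).intervalIntegrable _ _)
      ((cu.inner continuous_const).intervalIntegrable _ _),
    intervalIntegral.integral_add ((cu.inner cTT).intervalIntegrable _ _)
      ((cu.inner cThTh).intervalIntegrable _ _), hmean, hparts]
  ring

end Energies

section DeSitter

theorem abs_etaM_self_le (v : E5) : |etaM v v| ≤ ‖v‖ ^ 2 := by
  rw [EuclideanSpace.real_norm_sq_eq, Fin.sum_univ_five, abs_le, etaM]
  constructor <;> nlinarith [sq_nonneg (v 0), sq_nonneg (v 1), sq_nonneg (v 2),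
    sq_nonneg (v 3), sq_nonneg (v 4)]

variable {Y : ℝ → ℝ → E5} {t θ : ℝ}

theorem abs_gradSqEta_le_of_etaM_eq
    (h : etaM (pT Y t θ) (pT Y t θ) = etaM (pTh Y t θ) (pTh Y t θ)) :
    |gradSqEta Y t θ| ≤ 2 * ‖pTh Y t θ‖ ^ 2 := by
  rw [gradSqEta, h, ← two_mul, abs_mul, abs_two]
  exact mul_le_mul_of_nonneg_left (abs_etaM_self_le _) zero_le_two

theorem norm_pT_le_sqrt_gradSqXi : ‖pT Y t θ‖ ≤ √(gradSqXi Y t θ) :=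
  Real.le_sqrt_of_sq_le (le_add_of_nonneg_right (sq_nonneg _))

theorem abs_integral_inner_lapY_le {M G : ℝ} (hcont : Continuous (pTh Y t))
    (hharm : ∀ θ, lapY Y t θ = -gradSqEta Y t θ • Y t θ)
    (hconf : ∀ θ, etaM (pT Y t θ) (pT Y t θ) = etaM (pTh Y t θ) (pTh Y t θ))
    (hM : ∀ θ, ‖Y t θ‖ ≤ M) (hG : ∀ θ, √(gradSqXi Y t θ) ≤ G) :
    |∫ θ in 0..2 * π, ⟪pT Y t θ - Ystar (pT Y) t, lapY Y t θ⟫| ≤ 4 * M * G * alphaF Y t := by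
  have hpT : ∀ θ, ‖pT Y t θ‖ ≤ G := fun θ => norm_pT_le_sqrt_gradSqXi.trans (hG θ)
  have hG0 : 0 ≤ G := (norm_nonneg _).trans (hpT 0)
  have hpointwise : ∀ θ, ‖⟪pT Y t θ - Ystar (pT Y) t, lapY Y t θ⟫‖ ≤
      4 * M * G * ‖pTh Y t θ‖ ^ 2 := fun θ => by
    have hfluct : ‖pT Y t θ - Ystar (pT Y) t‖ ≤ 2 * G :=
      (norm_sub_le _ _).trans (by linarith [hpT θ, norm_Ystar_le hpT])
    rw [hharm, real_inner_smul_right, norm_mul, norm_neg, Real.norm_eq_abs]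
    calc |gradSqEta Y t θ| * ‖⟪pT Y t θ - Ystar (pT Y) t, Y t θ⟫‖
        ≤ (2 * ‖pTh Y t θ‖ ^ 2) * (2 * G * M) :=
          mul_le_mul (abs_gradSqEta_le_of_etaM_eq (hconf θ))
            ((norm_inner_le_norm _ _).trans
              (mul_le_mul hfluct (hM θ) (norm_nonneg _) (by positivity)))
            (norm_nonneg _) (by positivity)
      _ = 4 * M * G * ‖pTh Y t θ‖ ^ 2 := by ring
  calc |∫ θ in 0..2 * π, ⟪pT Y t θ - Ystar (pT Y) t, lapY Y t θ⟫|
      ≤ ∫ θ in 0..2 * π, 4 * M * G * ‖pTh Y t θ‖ ^ 2 :=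
        intervalIntegral.norm_integral_le_of_norm_le two_pi_pos.le
          (ae_of_all _ fun θ _ => hpointwise θ)
          ((continuous_const.mul (hcont.norm.pow 2)).intervalIntegrable _ _)
    _ = 4 * M * G * alphaF Y t := intervalIntegral.integral_const_mul _ _

end DeSitter

theorem stmt5_general (T M G : ℝ) (Y : ℝ → ℝ → E5)
    (hsm : ContDiff ℝ (⊤ : ℕ∞) (Function.uncurry Y))
    (hper : Periodic2pi Y)
    (hharm : HarmonicDS Y (Icc (-T) T))
    (hconf : ConformalEta Y (Icc (-T) T))
    (hM : ∀ t ∈ Icc (-T) T, ∀ θ : ℝ, ‖Y t θ‖ ≤ M)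
    (hG : ∀ t ∈ Icc (-T) T, ∀ θ : ℝ, Real.sqrt (gradSqXi Y t θ) ≤ G) :
    ∀ t ∈ Ioo (-T) T,
      |deriv (gammaF Y) t - 2 * deriv (alphaF Y) t| ≤ 16 * M * G * alphaF Y t := by
  intro t ht
  have htI : t ∈ Icc (-T) T := Ioo_subset_Icc_self ht
  have h2 : ContDiff ℝ 2 (uncurry Y) := hsm.of_le (WithTop.coe_le_coe.mpr le_top)
  have hbound := abs_integral_inner_lapY_le
    ((ContDiff.uncurry_pTh (n := 1) h2).continuous.uncurry_left t) (hharm t htI)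
    (fun θ => (hconf t htI θ).1) (hM t htI) (hG t htI)
  have hMGα : 0 ≤ M * G * alphaF Y t :=
    mul_nonneg (mul_nonneg ((norm_nonneg _).trans (hM t htI 0))
      ((Real.sqrt_nonneg _).trans (hG t htI 0)))
      (intervalIntegral.integral_nonneg two_pi_pos.le fun _ _ => sq_nonneg _)
  rw [deriv_gammaF_sub_two_mul_deriv_alphaF h2 hper t, abs_mul, abs_two]
  linarith

/-- For a conformal harmonic map into de Sitter space, bounded by `M` with gradient bounded
by `G`, one has `|γ'(t) − 2α'(t)| ≤ 16 M G α(t)`. -/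
theorem stmt5 (T M G : ℝ) (hT : 0 < T) (Y : ℝ → ℝ → E5)
    (hsm : ContDiff ℝ (⊤ : ℕ∞) (Function.uncurry Y))
    (hper : Periodic2pi Y)
    (hharm : HarmonicDS Y (Icc (-T) T))
    (hconf : ConformalEta Y (Icc (-T) T))
    (hM : ∀ t ∈ Icc (-T) T, ∀ θ : ℝ, ‖Y t θ‖ ≤ M)
    (hG : ∀ t ∈ Icc (-T) T, ∀ θ : ℝ, Real.sqrt (gradSqXi Y t θ) ≤ G) :
    ∀ t ∈ Ioo (-T) T,
      |deriv (gammaF Y) t - 2 * deriv (alphaF Y) t| ≤ 16 * M * G * alphaF Y t :=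
  stmt5_general T M G Y hsm hper hharm hconf hM hG
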